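/- arXiv:2501.13457 — 2 statements merged into one kernel-verified Lean document; each statement's English description precedes it below -/
import Mathlib

section
/- Soundness of semantics-based STL decomposition (Lemma 1): Let X be a type and let φ be an STL formula in positive normal form without disjunctions, built from atomic predicates μ : X → Prop by the grammar φ ::= μ | φ₁ ∧ φ₂ | F_{[a,b]}φ | G_{[a,b]}φ | φ₁ U_{[a,b]} φ₂ (a, b : ℕ, a ≤ b), where in every until-subformula φ₁ U_{[a,b]} φ₂ the left operand φ₁ is a conjunction of formulas of the form G_{[c,d]}μ. Let (P_φ, T_φ, Λ_φ) be the progresses, unary time-variable constraints, and time variables produced by the recursive decomposition procedure, and let F_φ ⊆ ℕ^{Λ_φ} be the set of assignments λ satisfying every interval constraint in T_φ. Then for every signal x : ℕ → X: x satisfies φ (under the Boolean semantics of STL) if and only if there exists an assignment λ ∈ F_φ such that every progress P ∈ P_φ, with its interval endpoints evaluated at λ, holds on x. In particular, if Λ_φ = ∅ then x satisfies φ iff every progress in P_φ holds on x. -/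
/-! Signals, STL syntax/semantics, and the semantics-based decomposition into
progresses and unary time-variable constraints. -/

/-- The `k`-shift of a signal. -/
def shift {X : Type} (x : ℕ → X) (k : ℕ) : ℕ → X := fun t => x (t + k)

/-- Conjunctions of formulas of the form `G_{[c,d]} μ` (always over an atomic predicate),
the only shape allowed as the left operand of an until. -/
inductive GAtomConj (X : Type) where
  | gatom : ℕ → ℕ → (X → Prop) → GAtomConj X
  | conj : GAtomConj X → GAtomConj X → GAtomConj X

/-- STL formulas in positive normal form without disjunctions, over atomic predicates
`μ : X → Prop`, by the grammar `φ ::= μ | φ₁ ∧ φ₂ | F_{[a,b]}φ | G_{[a,b]}φ | φ₁ U_{[a,b]} φ₂`,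
where every until-left operand is a conjunction of always-over-atomic formulas. -/
inductive STL (X : Type) where
  | atom : (X → Prop) → STL X
  | conj : STL X → STL X → STL X
  | F : ℕ → ℕ → STL X → STL X
  | G : ℕ → ℕ → STL X → STL X
  | U : GAtomConj X → ℕ → ℕ → STL X → STL X

/-- Boolean semantics of until-left operands. -/
def GAtomConj.sat {X : Type} : GAtomConj X → (ℕ → X) → Prop
  | .gatom c d μ, x => ∀ k ∈ Set.Icc c d, μ (shift x k 0)
  | .conj p q, x => p.sat x ∧ q.sat x

/-- Boolean semantics of STL over signals. -/
def STL.sat {X : Type} : STL X → (ℕ → X) → Prop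
  | .atom μ, x => μ (x 0)
  | .conj φ ψ, x => φ.sat x ∧ ψ.sat x
  | .F a b φ, x => ∃ k ∈ Set.Icc a b, φ.sat (shift x k)
  | .G a b φ, x => ∀ k ∈ Set.Icc a b, φ.sat (shift x k)
  | .U g a b ψ, x =>
      ∃ k ∈ Set.Icc a b, ψ.sat (shift x k) ∧ ∀ j ∈ Set.Icc 0 k, g.sat (shift x j)

/-- Well-formedness: every time interval `[a,b]` in the formula satisfies `a ≤ b`. -/
def GAtomConj.WF {X : Type} : GAtomConj X → Prop
  | .gatom c d _ => c ≤ d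
  | .conj p q => p.WF ∧ q.WF

/-- Well-formedness: every time interval `[a,b]` in the formula satisfies `a ≤ b`. -/
def STL.WF {X : Type} : STL X → Prop
  | .atom _ => True
  | .conj φ ψ => φ.WF ∧ ψ.WF
  | .F a b φ => a ≤ b ∧ φ.WF
  | .G a b φ => a ≤ b ∧ φ.WF
  | .U g a b ψ => a ≤ b ∧ g.WF ∧ ψ.WF

/-- An interval endpoint: an affine 0-1 combination of the time variables plus a constant,
recorded as the constant together with the list of variables occurring (with coefficient 1). -/
structure Aff (ι : Type) where
  const : ℕ
  vars : List ι

/-- Evaluation of an endpoint at an assignment of the time variables. -/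
def Aff.eval {ι : Type} (e : Aff ι) (lam : ι → ℕ) : ℕ := e.const + (e.vars.map lam).sum

/-- Rename the time variables of an endpoint. -/
def Aff.rename {ι ι' : Type} (f : ι → ι') (e : Aff ι) : Aff ι' := ⟨e.const, e.vars.map f⟩

/-- Shift an endpoint by a constant. -/
def Aff.shiftConst {ι : Type} (k : ℕ) (e : Aff ι) : Aff ι := ⟨e.const + k, e.vars⟩

/-- Add a time variable to an endpoint. -/
def Aff.addVar {ι : Type} (v : ι) (e : Aff ι) : Aff ι := ⟨e.const, v :: e.vars⟩

/-- A progress: a reachability progress `R(a_Λ, b_Λ, μ)` or an invariance progress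
`I(a_Λ, b_Λ, μ)`, whose endpoints may depend on the time variables in `ι`. -/
inductive Prog (X ι : Type) where
  | reach : Aff ι → Aff ι → (X → Prop) → Prog X ι
  | inv : Aff ι → Aff ι → (X → Prop) → Prog X ι

/-- A progress holds on a signal `x` under an assignment `lam` of the time variables:
`R(a,b,μ)` holds iff `μ (x t)` for some `t ∈ [a,b]`, and `I(a,b,μ)` holds iff `μ (x t)`
for all `t ∈ [a,b]` (endpoints evaluated at `lam`). -/
def Prog.holds {X ι : Type} : Prog X ι → (ι → ℕ) → (ℕ → X) → Prop
  | .reach lo hi μ, lam, x => ∃ t ∈ Set.Icc (lo.eval lam) (hi.eval lam), μ (x t)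
  | .inv lo hi μ, lam, x => ∀ t ∈ Set.Icc (lo.eval lam) (hi.eval lam), μ (x t)

/-- Rename the time variables of a progress. -/
def Prog.rename {X ι ι' : Type} (f : ι → ι') : Prog X ι → Prog X ι'
  | .reach lo hi μ => .reach (lo.rename f) (hi.rename f) μ
  | .inv lo hi μ => .inv (lo.rename f) (hi.rename f) μ

/-- Shift both endpoints of a progress by a constant. -/
def Prog.shiftConst {X ι : Type} (k : ℕ) : Prog X ι → Prog X ι
  | .reach lo hi μ => .reach (lo.shiftConst k) (hi.shiftConst k) μ
  | .inv lo hi μ => .inv (lo.shiftConst k) (hi.shiftConst k) μ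

/-- Add a time variable to both endpoints of a progress. -/
def Prog.addVar {X ι : Type} (v : ι) : Prog X ι → Prog X ι
  | .reach lo hi μ => .reach (lo.addVar v) (hi.addVar v) μ
  | .inv lo hi μ => .inv (lo.addVar v) (hi.addVar v) μ

/-- Whether a progress is an invariance progress with constant endpoints. -/
def Prog.isConstInv {X ι : Type} : Prog X ι → Bool
  | .inv ⟨_, []⟩ ⟨_, []⟩ _ => true
  | _ => false

/-- The result of the decomposition: a set of time variables `ι` (= `Λ_φ`), one unary
interval constraint `λ_i ∈ [cLo i, cHi i]` per variable (= `T_φ`), and a list of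
progresses (= `P_φ`). -/
structure Decomp (X : Type) where
  ι : Type
  cLo : ι → ℕ
  cHi : ι → ℕ
  progs : List (Prog X ι)

/-- The feasible assignments: those satisfying every unary interval constraint. -/
def Decomp.Feasible {X : Type} (D : Decomp X) (lam : D.ι → ℕ) : Prop :=
  ∀ i, D.cLo i ≤ lam i ∧ lam i ≤ D.cHi i

/-- The constant-endpoint invariances `I(c,d,μ)` constituting the decomposition of a
conjunction of always-over-atomic formulas. -/
def GAtomConj.toList {X : Type} : GAtomConj X → List (ℕ × ℕ × (X → Prop))
  | .gatom c d μ => [(c, d, μ)]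
  | .conj p q => p.toList ++ q.toList

/-- The atomic predicate of a formula, if the formula is a bare atom. -/
def STL.atomOf {X : Type} : STL X → Option (X → Prop)
  | .atom μ => some μ
  | _ => none

/-- Disjoint union of two decompositions (variables renamed apart), for conjunctions. -/
def Decomp.conjoin {X : Type} (D₁ D₂ : Decomp X) : Decomp X :=
  ⟨D₁.ι ⊕ D₂.ι, Sum.elim D₁.cLo D₂.cLo, Sum.elim D₁.cHi D₂.cHi,
    D₁.progs.map (Prog.rename Sum.inl) ++ D₂.progs.map (Prog.rename Sum.inr)⟩

/-- Outer `F_{[a,b]}` rule: for `b > a`, introduce a fresh variable `λ` (the `none` index)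
with constraint `λ ∈ [a,b]` and add `λ` to both endpoints of every progress; for `a = b`,
add the constant `a` instead, with no fresh variable. -/
def Decomp.outerF {X : Type} (a b : ℕ) (D : Decomp X) : Decomp X :=
  if a = b then
    ⟨D.ι, D.cLo, D.cHi, D.progs.map (Prog.shiftConst a)⟩
  else
    ⟨Option D.ι, fun i => i.elim a D.cLo, fun i => i.elim b D.cHi,
      D.progs.map (fun p => (p.rename some).addVar none)⟩

/-- Outer `G_{[a,b]}` rule: one independent copy of the decomposition for each
`k = a + j ∈ [a,b]`, with all endpoints shifted by `+k`, merging the copies of each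
constant-endpoint invariance `I(c,d,μ)` into the single progress `I(c+a, d+b, μ)`. -/
def Decomp.outerG {X : Type} (a b : ℕ) (D : Decomp X) : Decomp X :=
  ⟨Fin (b + 1 - a) × D.ι, fun p => D.cLo p.2, fun p => D.cHi p.2,
    (D.progs.filterMap (fun p =>
      match p with
      | .inv ⟨c, []⟩ ⟨d, []⟩ μ => some (.inv ⟨c + a, []⟩ ⟨d + b, []⟩ μ)
      | _ => none))
    ++ ((List.finRange (b + 1 - a)).flatMap (fun j =>
        (D.progs.filter (fun p => !p.isConstInv)).map
          (fun p => (p.rename (fun i => (j, i))).shiftConst (a + j.1))))⟩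

/-- Outer until rule for `φ U_{[a,b]} ψ`, applied to the decomposition `D` of `ψ` and the
left operand `g` (whose decomposition consists of the constant-endpoint invariances
`I(c,d,μ)` listed by `g.toList`): introduce a fresh variable `λ` (the `none` index) with
constraint `λ ∈ [a,b]`, shift all endpoints of the progresses of `ψ` by `+λ`, and replace
each `I(c,d,μ)` from the left operand by `I(c, d+λ, μ)`. -/
def Decomp.outerU {X : Type} (g : GAtomConj X) (a b : ℕ) (D : Decomp X) : Decomp X :=
  ⟨Option D.ι, fun i => i.elim a D.cLo, fun i => i.elim b D.cHi,
    (D.progs.map (fun p => (p.rename some).addVar none))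
    ++ g.toList.map (fun cdm =>
        .inv ⟨cdm.1, []⟩ ⟨cdm.2.1, [(none : Option D.ι)]⟩ cdm.2.2)⟩

/-- The recursive semantics-based decomposition of an STL formula into progresses,
time variables, and unary time-variable constraints.  The base cases are:
`F_{[a,b]}μ ↦ ({R(λ,λ,μ)}, {λ ∈ [a,b]})`, `G_{[a,b]}μ ↦ ({I(a,b,μ)}, ∅)`, and an atom
`μ ↦ ({R(0,0,μ)}, ∅)`; compound formulas use the outer rules above. -/
def decompose {X : Type} : STL X → Decomp X
  | .atom μ =>
      ⟨Empty, fun i => i.elim, fun i => i.elim, [.reach ⟨0, []⟩ ⟨0, []⟩ μ]⟩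
  | .conj φ ψ => (decompose φ).conjoin (decompose ψ)
  | .F a b φ =>
      match φ.atomOf with
      | some μ =>
          -- base case `F_{[a,b]} μ`: a fresh variable `λ` with constraint `λ ∈ [a,b]`
          -- and the single progress `R(λ, λ, μ)`
          ⟨Unit, fun _ => a, fun _ => b, [.reach ⟨0, [()]⟩ ⟨0, [()]⟩ μ]⟩
      | none => (decompose φ).outerF a b
  | .G a b φ =>
      match φ.atomOf with
      | some μ =>
          -- base case `G_{[a,b]} μ`: the single progress `I(a, b, μ)`, no constraints
          ⟨Empty, fun i => i.elim, fun i => i.elim, [.inv ⟨a, []⟩ ⟨b, []⟩ μ]⟩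
      | none => (decompose φ).outerG a b
  | .U g a b ψ => (decompose ψ).outerU g a b


/-! ### Auxiliary lemmas -/

lemma Aff.eval_rename {ι ι' : Type} (f : ι → ι') (e : Aff ι) (lam : ι' → ℕ) :
    (e.rename f).eval lam = e.eval (lam ∘ f) := by
  simp [Aff.eval, Aff.rename, List.map_map]

lemma Aff.eval_shiftConst {ι : Type} (k : ℕ) (e : Aff ι) (lam : ι → ℕ) :
    (e.shiftConst k).eval lam = e.eval lam + k := by
  simp [Aff.eval, Aff.shiftConst]; ring

lemma Aff.eval_addVar {ι : Type} (v : ι) (e : Aff ι) (lam : ι → ℕ) :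
    (e.addVar v).eval lam = e.eval lam + lam v := by
  simp [Aff.eval, Aff.addVar]; ring

lemma Prog.holds_rename {X ι ι' : Type} (f : ι → ι') (p : Prog X ι) (lam : ι' → ℕ) (x : ℕ → X) :
    (p.rename f).holds lam x ↔ p.holds (lam ∘ f) x := by
  cases p <;> simp [Prog.holds, Prog.rename, Aff.eval_rename]

lemma Prog.holds_shiftConst {X ι : Type} (k : ℕ) (p : Prog X ι) (lam : ι → ℕ) (x : ℕ → X) :
    (p.shiftConst k).holds lam x ↔ p.holds lam (shift x k) := by
  cases p with
  | reach lo hi μ =>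
      simp only [Prog.holds, Prog.shiftConst, Aff.eval_shiftConst, Set.mem_Icc, shift]
      constructor
      · rintro ⟨t, ⟨h1, h2⟩, h3⟩
        refine ⟨t - k, ⟨by omega, by omega⟩, ?_⟩
        have : t - k + k = t := by omega
        rwa [this]
      · rintro ⟨t, ⟨h1, h2⟩, h3⟩
        exact ⟨t + k, ⟨by omega, by omega⟩, h3⟩
  | inv lo hi μ =>
      simp only [Prog.holds, Prog.shiftConst, Aff.eval_shiftConst, Set.mem_Icc, shift]
      constructor
      · rintro h t ⟨h1, h2⟩
        exact h (t + k) ⟨by omega, by omega⟩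
      · rintro h t ⟨h1, h2⟩
        have h3 := h (t - k) ⟨by omega, by omega⟩
        have : t - k + k = t := by omega
        rwa [this] at h3

lemma Prog.holds_addVar {X ι : Type} (v : ι) (p : Prog X ι) (lam : ι → ℕ) (x : ℕ → X) :
    (p.addVar v).holds lam x ↔ p.holds lam (shift x (lam v)) := by
  have h : ∀ e : Aff ι, (e.addVar v).eval lam = (e.shiftConst (lam v)).eval lam := by
    intro e; rw [Aff.eval_addVar, Aff.eval_shiftConst]
  rw [← Prog.holds_shiftConst]
  cases p <;> simp [Prog.holds, Prog.addVar, Prog.shiftConst, h]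

/-- Interval coverage: `[c+a, d+b] = ⋃_{j∈[a,b]} [c+j, d+j]` when `a ≤ b`, `c ≤ d`. -/
lemma icc_cover (a b c d : ℕ) (hab : a ≤ b) (hcd : c ≤ d) (Q : ℕ → Prop) :
    (∀ j ∈ Set.Icc a b, ∀ s ∈ Set.Icc c d, Q (s + j)) ↔ ∀ t ∈ Set.Icc (c + a) (d + b), Q t := by
  constructor
  · rintro h t ⟨h1, h2⟩
    have hj := h (min b (t - c)) ⟨by omega, by omega⟩ (t - min b (t - c)) ⟨by omega, by omega⟩
    have : t - min b (t - c) + min b (t - c) = t := by omega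
    rwa [this] at hj
  · rintro h j ⟨hj1, hj2⟩ s ⟨hs1, hs2⟩
    exact h (s + j) ⟨by omega, by omega⟩

lemma GAtomConj.sat_iff {X : Type} (g : GAtomConj X) (y : ℕ → X) :
    g.sat y ↔ ∀ cdm ∈ g.toList, ∀ s ∈ Set.Icc cdm.1 cdm.2.1, cdm.2.2 (y s) := by
  induction g with
  | gatom c d μ => simp [GAtomConj.sat, GAtomConj.toList, shift]
  | conj p q ihp ihq =>
      simp only [GAtomConj.sat, GAtomConj.toList, List.mem_append, ihp, ihq]
      constructor
      · rintro ⟨hp, hq⟩ cdm (h | h)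
        · exact hp cdm h
        · exact hq cdm h
      · intro h
        exact ⟨fun cdm hm => h cdm (Or.inl hm), fun cdm hm => h cdm (Or.inr hm)⟩

lemma GAtomConj.wf_toList {X : Type} (g : GAtomConj X) (hg : g.WF) :
    ∀ cdm ∈ g.toList, cdm.1 ≤ cdm.2.1 := by
  induction g with
  | gatom c d μ => simpa [GAtomConj.toList, GAtomConj.WF] using hg
  | conj p q ihp ihq =>
      obtain ⟨h1, h2⟩ := hg
      simp only [GAtomConj.toList, List.mem_append]
      rintro cdm (h | h)
      · exact ihp h1 cdm h
      · exact ihq h2 cdm h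

/-- All the constant-endpoint invariances in a progress list have ordered endpoints. -/
def ConstInvOK {X ι : Type} (l : List (Prog X ι)) : Prop :=
  ∀ c d (μ : X → Prop), Prog.inv ⟨c, []⟩ ⟨d, []⟩ μ ∈ l → c ≤ d

lemma Prog.isConstInv_iff {X ι : Type} (p : Prog X ι) :
    p.isConstInv = true ↔ ∃ c d μ, p = Prog.inv ⟨c, []⟩ ⟨d, []⟩ μ := by
  rcases p with ⟨⟨c, l1⟩, ⟨d, l2⟩, μ⟩ | ⟨⟨c, l1⟩, ⟨d, l2⟩, μ⟩ <;>
    cases l1 <;> cases l2 <;> simp [Prog.isConstInv]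

lemma outerF_iff {X : Type} (a b : ℕ) (hab : a ≤ b) (D : Decomp X) (x : ℕ → X) :
    (∃ lam, (D.outerF a b).Feasible lam ∧ ∀ P ∈ (D.outerF a b).progs, P.holds lam x) ↔
    ∃ k ∈ Set.Icc a b, ∃ lam, D.Feasible lam ∧ ∀ P ∈ D.progs, P.holds lam (shift x k) := by
  by_cases hab' : a = b
  · subst hab'
    have hF : D.outerF a a = ⟨D.ι, D.cLo, D.cHi, D.progs.map (Prog.shiftConst a)⟩ := by
      simp [Decomp.outerF]
    rw [hF]
    constructor
    · rintro ⟨lam, hf, hp⟩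
      refine ⟨a, by simp, lam, hf, fun P hP => ?_⟩
      have := hp _ (List.mem_map_of_mem hP)
      rwa [Prog.holds_shiftConst] at this
    · rintro ⟨k, hk, lam, hf, hp⟩
      simp only [Set.mem_Icc] at hk
      have hk' : k = a := by omega
      subst hk'
      refine ⟨lam, hf, fun P hP => ?_⟩
      obtain ⟨q, hq, rfl⟩ := List.mem_map.1 hP
      rw [Prog.holds_shiftConst]
      exact hp q hq
  · have hF : D.outerF a b = ⟨Option D.ι, fun i => i.elim a D.cLo, fun i => i.elim b D.cHi,
        D.progs.map (fun p => (p.rename some).addVar none)⟩ := by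
      simp [Decomp.outerF, hab']
    rw [hF]
    constructor
    · rintro ⟨lam, hf, hp⟩
      refine ⟨lam none, ?_, lam ∘ some, fun i => hf (some i), fun P hP => ?_⟩
      · simpa using hf none
      · have := hp _ (List.mem_map_of_mem hP)
        rwa [Prog.holds_addVar, Prog.holds_rename] at this
    · rintro ⟨k, hk, lam, hf, hp⟩
      simp only [Set.mem_Icc] at hk
      refine ⟨fun o => o.elim k lam, fun i => ?_, fun P hP => ?_⟩
      · cases i with
        | none => exact hk
        | some i => exact hf i
      · obtain ⟨q, hq, rfl⟩ := List.mem_map.1 hP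
        rw [Prog.holds_addVar, Prog.holds_rename]
        exact hp q hq

lemma gpart_iff {X : Type} (g : GAtomConj X) (hg : g.WF) (k : ℕ) (x : ℕ → X) :
    (∀ j ∈ Set.Icc 0 k, g.sat (shift x j)) ↔
    ∀ cdm ∈ g.toList, ∀ t ∈ Set.Icc cdm.1 (cdm.2.1 + k), cdm.2.2 (x t) := by
  constructor
  · intro h cdm hm t ht
    simp only [Set.mem_Icc] at ht
    have hcov := (icc_cover 0 k cdm.1 cdm.2.1 (Nat.zero_le _) (g.wf_toList hg cdm hm)
      (fun t => cdm.2.2 (x t))).1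
    refine hcov ?_ t ⟨by omega, by omega⟩
    intro j hj s hs
    exact (g.sat_iff (shift x j)).1 (h j hj) cdm hm s hs
  · intro h j hj
    simp only [Set.mem_Icc] at hj
    rw [GAtomConj.sat_iff]
    intro cdm hm s hs
    simp only [Set.mem_Icc] at hs
    exact h cdm hm (s + j) ⟨by omega, by omega⟩

lemma outerU_iff {X : Type} (g : GAtomConj X) (hg : g.WF) (a b : ℕ) (D : Decomp X) (x : ℕ → X) :
    (∃ lam, ((D.outerU g a b).Feasible lam ∧ ∀ P ∈ (D.outerU g a b).progs, P.holds lam x)) ↔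
    ∃ k ∈ Set.Icc a b, (∃ lam, D.Feasible lam ∧ ∀ P ∈ D.progs, P.holds lam (shift x k)) ∧
      ∀ j ∈ Set.Icc 0 k, g.sat (shift x j) := by
  constructor
  · rintro ⟨lam, hf, hp⟩
    refine ⟨lam none, hf none, ⟨lam ∘ some, fun i => hf (some i), fun P hP => ?_⟩, ?_⟩
    · have := hp _ (List.mem_append_left _ (List.mem_map_of_mem hP))
      exact (Prog.holds_rename _ _ _ _).1 ((Prog.holds_addVar _ _ _ _).1 this)
    · rw [gpart_iff g hg]
      intro cdm hm t ht
      have := hp _ (List.mem_append_right _ (List.mem_map_of_mem hm))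
      simp only [Prog.holds, Aff.eval, List.map_nil, List.sum_nil, List.map_cons, List.sum_cons,
        add_zero, Set.mem_Icc, Option.elim_none, Option.elim_some] at this ht
      exact this t ht
  · rintro ⟨k, hk, ⟨lam, hf, hp⟩, hgp⟩
    simp only [Set.mem_Icc] at hk
    refine ⟨fun o => o.elim k lam, fun i => ?_, fun P hP => ?_⟩
    · cases i with
      | none => exact hk
      | some i => exact hf i
    rcases List.mem_append.1 hP with h | h
    · obtain ⟨q, hq, rfl⟩ := List.mem_map.1 h
      exact (Prog.holds_addVar _ _ _ _).2 ((Prog.holds_rename _ _ _ _).2 (hp q hq))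
    · obtain ⟨cdm, hm, rfl⟩ := List.mem_map.1 h
      have := (gpart_iff g hg k x).1 hgp cdm hm
      simp only [Prog.holds, Aff.eval, List.map_nil, List.sum_nil, List.map_cons, List.sum_cons,
        add_zero, Set.mem_Icc, Option.elim_none, Option.elim_some]
      intro t ht
      exact this t ⟨by omega, ht.2⟩

lemma outerG_iff {X : Type} (a b : ℕ) (hab : a ≤ b) (D : Decomp X) (hD : ConstInvOK D.progs)
    (x : ℕ → X) :
    (∃ lam, (D.outerG a b).Feasible lam ∧ ∀ P ∈ (D.outerG a b).progs, P.holds lam x) ↔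
    ∀ k ∈ Set.Icc a b, ∃ lam, D.Feasible lam ∧ ∀ P ∈ D.progs, P.holds lam (shift x k) := by
  constructor
  · rintro ⟨lam', hf, hp⟩ k hk
    simp only [Set.mem_Icc] at hk
    set j : Fin (b + 1 - a) := ⟨k - a, by omega⟩ with hj
    refine ⟨fun i => lam' (j, i), fun i => hf (j, i), fun p hpD => ?_⟩
    by_cases hci : p.isConstInv
    · obtain ⟨c, d, μ, rfl⟩ := (Prog.isConstInv_iff p).1 hci
      have hmem : Prog.inv ⟨c + a, []⟩ ⟨d + b, []⟩ μ ∈ (D.outerG a b).progs := by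
        exact List.mem_append_left _ (List.mem_filterMap.2 ⟨_, hpD, rfl⟩)
      have hm := hp _ hmem
      simp only [Prog.holds, Aff.eval, List.map_nil, List.sum_nil, add_zero, Set.mem_Icc] at hm ⊢
      intro s hs
      exact hm (s + k) ⟨by omega, by omega⟩
    · have hmem : ((p.rename (fun i => (j, i))).shiftConst (a + j.1)) ∈ (D.outerG a b).progs := by
        refine List.mem_append_right _ (List.mem_flatMap.2 ⟨j, List.mem_finRange j, ?_⟩)
        exact List.mem_map_of_mem (List.mem_filter.2 ⟨hpD, by simp [hci]⟩)
      have hm := hp _ hmem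
      replace hm := (Prog.holds_rename _ _ _ _).1 ((Prog.holds_shiftConst _ _ _ _).1 hm)
      have hjv : (j : ℕ) = k - a := rfl
      rw [hjv, show a + (k - a) = k from by omega] at hm
      exact hm
  · intro H
    choose f h1 h2 using H
    refine ⟨fun p => f (a + p.1.1) ⟨Nat.le_add_right a p.1.1, by have := p.1.isLt; omega⟩ p.2,
      fun p => h1 _ _ p.2, fun P hP => ?_⟩
    rcases List.mem_append.1 hP with h | h
    · obtain ⟨p, hpD, hpe⟩ := List.mem_filterMap.1 h
      rcases p with ⟨lo, hi, μ⟩ | ⟨⟨c, lc⟩, ⟨d, ld⟩, μ⟩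
      · simp at hpe
      · cases lc with
        | cons v l => simp at hpe
        | nil =>
          cases ld with
          | cons v l => simp at hpe
          | nil =>
            obtain rfl : Prog.inv ⟨c + a, []⟩ ⟨d + b, []⟩ μ = P := Option.some.inj hpe
            have hcd : c ≤ d := hD c d μ hpD
            simp only [Prog.holds, Aff.eval, List.map_nil, List.sum_nil, add_zero, Set.mem_Icc]
            intro t ht
            refine (icc_cover a b c d hab hcd (fun t => μ (x t))).1 ?_ t
              (by simp only [Set.mem_Icc]; omega)
            intro k hk s hs
            exact h2 k hk _ hpD s hs
    · obtain ⟨j, _, hmem⟩ := List.mem_flatMap.1 h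
      obtain ⟨p, hpf, rfl⟩ := List.mem_map.1 hmem
      exact (Prog.holds_shiftConst _ _ _ _).2 ((Prog.holds_rename _ _ _ _).2
        (h2 (a + j.1) ⟨Nat.le_add_right a j.1, by have := j.isLt; omega⟩ p
        (List.mem_of_mem_filter hpf)))

lemma STL.atomOf_eq_some {X : Type} {φ : STL X} {μ : X → Prop} (h : φ.atomOf = some μ) :
    φ = STL.atom μ := by
  cases φ <;> simp_all [STL.atomOf]

lemma decompose_F_none {X : Type} (a b : ℕ) (φ : STL X) (h : φ.atomOf = none) :
    decompose (STL.F a b φ) = (decompose φ).outerF a b := by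
  rw [decompose, h]

lemma decompose_G_none {X : Type} (a b : ℕ) (φ : STL X) (h : φ.atomOf = none) :
    decompose (STL.G a b φ) = (decompose φ).outerG a b := by
  rw [decompose, h]

lemma decompose_constInvOK {X : Type} (φ : STL X) : φ.WF → ConstInvOK (decompose φ).progs := by
  induction φ with
  | atom μ => intro _ c d ν h; simp [decompose] at h; cases h with | tail _ h => cases h
  | conj φ ψ ihφ ihψ =>
      rintro ⟨h1, h2⟩ c d ν h
      rw [decompose, Decomp.conjoin] at h
      simp only [decompose, Decomp.conjoin, List.mem_append, List.mem_map] at h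
      rcases h with ⟨q, hq, he⟩ | ⟨q, hq, he⟩ <;>
      · rcases q with ⟨lo, hi, μ⟩ | ⟨⟨c', lc⟩, ⟨d', ld⟩, μ⟩
        · simp [Prog.rename] at he
        · simp only [Prog.rename, Aff.rename, Prog.inv.injEq, Aff.mk.injEq] at he
          obtain ⟨⟨rfl, hlc⟩, ⟨rfl, hld⟩, rfl⟩ := he
          rw [List.map_eq_nil_iff] at hlc hld
          subst hlc; subst hld
          first
            | exact ihφ h1 _ _ _ hq
            | exact ihψ h2 _ _ _ hq
  | F a b φ ih =>
      rintro ⟨hab, hwφ⟩ c d ν h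
      rcases hat : φ.atomOf with _ | μ
      · rw [decompose_F_none a b φ hat] at h
        by_cases hab' : a = b
        · subst hab'
          have hF : (decompose φ).outerF a a = ⟨(decompose φ).ι, (decompose φ).cLo,
              (decompose φ).cHi, (decompose φ).progs.map (Prog.shiftConst a)⟩ := by
            simp [Decomp.outerF]
          rw [hF] at h
          simp only [List.mem_map] at h
          obtain ⟨q, hq, he⟩ := h
          rcases q with ⟨lo, hi, μ⟩ | ⟨⟨c', lc⟩, ⟨d', ld⟩, μ⟩
          · simp [Prog.shiftConst] at he
          · simp only [Prog.shiftConst, Aff.shiftConst, Prog.inv.injEq, Aff.mk.injEq] at he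
            obtain ⟨⟨rfl, rfl⟩, ⟨rfl, rfl⟩, rfl⟩ := he
            have := ih hwφ _ _ _ hq
            omega
        · have hF : (decompose φ).outerF a b = ⟨Option (decompose φ).ι,
              fun i => i.elim a (decompose φ).cLo, fun i => i.elim b (decompose φ).cHi,
              (decompose φ).progs.map (fun p => (p.rename some).addVar none)⟩ := by
            simp [Decomp.outerF, hab']
          rw [hF] at h
          simp only [List.mem_map] at h
          obtain ⟨q, hq, he⟩ := h
          rcases q with ⟨lo, hi, μ⟩ | ⟨lo, hi, μ⟩ <;>
            simp [Prog.addVar, Prog.rename, Aff.addVar, Aff.rename] at he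
      · rw [STL.atomOf_eq_some hat] at h
        simp [decompose, STL.atomOf] at h
        cases h with | tail _ h => cases h
  | G a b φ ih =>
      rintro ⟨hab, hwφ⟩ c d ν h
      rcases hat : φ.atomOf with _ | μ
      · rw [decompose_G_none a b φ hat] at h
        rw [Decomp.outerG] at h
        simp only [Decomp.outerG, List.mem_append, List.mem_filterMap, List.mem_flatMap,
          List.mem_map] at h
        rcases h with ⟨q, hq, he⟩ | ⟨j, _, q, hq, he⟩
        · rcases q with ⟨lo, hi, μ⟩ | ⟨⟨c', lc⟩, ⟨d', ld⟩, μ⟩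
          · simp at he
          · cases lc with
            | cons v l => simp at he
            | nil =>
              cases ld with
              | cons v l => simp at he
              | nil =>
                simp only [Option.some.injEq, Prog.inv.injEq, Aff.mk.injEq] at he
                obtain ⟨⟨rfl, _⟩, ⟨rfl, _⟩, rfl⟩ := he
                have := ih hwφ _ _ _ hq
                omega
        · have hq' := List.mem_of_mem_filter hq
          rcases q with ⟨lo, hi, μ⟩ | ⟨⟨c', lc⟩, ⟨d', ld⟩, μ⟩
          · simp [Prog.shiftConst, Prog.rename] at he
          · simp only [Prog.shiftConst, Prog.rename, Aff.shiftConst, Aff.rename,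
              Prog.inv.injEq, Aff.mk.injEq] at he
            obtain ⟨⟨rfl, hlc⟩, ⟨rfl, hld⟩, rfl⟩ := he
            rw [List.map_eq_nil_iff] at hlc hld
            subst hlc; subst hld
            have := ih hwφ _ _ _ hq'
            omega
      · rw [STL.atomOf_eq_some hat] at h
        simp only [decompose, STL.atomOf, List.mem_singleton] at h
        obtain ⟨h1, h2, h3⟩ := Prog.inv.inj (List.mem_singleton.1 h)
        obtain ⟨rfl, -⟩ := Aff.mk.inj h1
        obtain ⟨rfl, -⟩ := Aff.mk.inj h2
        exact hab
  | U g a b ψ ih =>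
      rintro ⟨hab, hg, hwψ⟩ c d ν h
      rw [decompose, Decomp.outerU] at h
      simp only [decompose, Decomp.outerU, List.mem_append, List.mem_map] at h
      rcases h with ⟨q, hq, he⟩ | ⟨q, hq, he⟩
      · rcases q with ⟨lo, hi, μ⟩ | ⟨lo, hi, μ⟩ <;>
          simp [Prog.addVar, Prog.rename, Aff.addVar, Aff.rename] at he
      · simp only [Prog.inv.injEq, Aff.mk.injEq] at he
        obtain ⟨_, ⟨_, hld⟩, _⟩ := he
        simp at hld

lemma decompose_sound {X : Type} (φ : STL X) : φ.WF → ∀ x : ℕ → X,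
    (φ.sat x ↔ ∃ lam : (decompose φ).ι → ℕ,
        (decompose φ).Feasible lam ∧ ∀ P ∈ (decompose φ).progs, P.holds lam x) := by
  induction φ with
  | atom μ =>
      intro _ x
      simp only [STL.sat, decompose]
      constructor
      · intro h
        refine ⟨fun i => i.elim, fun i => i.elim, fun P hP => ?_⟩
        replace hP := List.mem_singleton.1 hP
        subst hP
        exact ⟨0, by simp [Aff.eval], h⟩
      · rintro ⟨lam, -, hp⟩
        have := hp _ (List.mem_singleton_self _)
        simp only [Prog.holds, Aff.eval, List.map_nil, List.sum_nil, add_zero, Set.mem_Icc] at this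
        obtain ⟨t, ⟨-, ht⟩, h⟩ := this
        interval_cases t
        exact h
  | conj φ ψ ihφ ihψ =>
      rintro ⟨h1, h2⟩ x
      rw [STL.sat, ihφ h1 x, ihψ h2 x]
      show _ ↔ ∃ lam : ((decompose φ).conjoin (decompose ψ)).ι → ℕ, _
      constructor
      · rintro ⟨⟨l1, hf1, hp1⟩, ⟨l2, hf2, hp2⟩⟩
        refine ⟨Sum.elim l1 l2, fun i => ?_, fun P hP => ?_⟩
        · cases i with
          | inl i => exact hf1 i
          | inr i => exact hf2 i
        · rcases List.mem_append.1 hP with h | h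
          · obtain ⟨q, hq, rfl⟩ := List.mem_map.1 h
            exact (Prog.holds_rename _ _ _ _).2 (hp1 q hq)
          · obtain ⟨q, hq, rfl⟩ := List.mem_map.1 h
            exact (Prog.holds_rename _ _ _ _).2 (hp2 q hq)
      · rintro ⟨lam, hf, hp⟩
        refine ⟨⟨lam ∘ Sum.inl, fun i => hf (.inl i), fun q hq => ?_⟩,
                ⟨lam ∘ Sum.inr, fun i => hf (.inr i), fun q hq => ?_⟩⟩
        · have := hp _ (List.mem_append_left _ (List.mem_map_of_mem hq))
          exact (Prog.holds_rename _ _ _ _).1 this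
        · have := hp _ (List.mem_append_right _ (List.mem_map_of_mem hq))
          exact (Prog.holds_rename _ _ _ _).1 this
  | F a b φ ih =>
      rintro ⟨hab, hwφ⟩ x
      rcases hat : φ.atomOf with _ | μ
      · rw [decompose_F_none a b φ hat, outerF_iff a b hab, STL.sat]
        constructor
        · rintro ⟨k, hk, hs⟩
          exact ⟨k, hk, (ih hwφ _).1 hs⟩
        · rintro ⟨k, hk, hs⟩
          exact ⟨k, hk, (ih hwφ _).2 hs⟩
      · rw [STL.atomOf_eq_some hat]
        simp only [STL.sat, decompose, STL.atomOf]
        constructor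
        · rintro ⟨k, hk, hs⟩
          simp only [Set.mem_Icc] at hk
          refine ⟨fun _ => k, fun _ => hk, fun P hP => ?_⟩
          replace hP := List.mem_singleton.1 hP
          subst hP
          refine ⟨k, by simp [Aff.eval], ?_⟩
          simpa [shift] using hs
        · rintro ⟨lam, hf, hp⟩
          have := hp _ (List.mem_singleton_self _)
          simp only [Prog.holds, Aff.eval, List.map_cons, List.map_nil, List.sum_cons,
            List.sum_nil, add_zero, zero_add, Set.mem_Icc] at this
          obtain ⟨t, ⟨ht1, ht2⟩, h⟩ := this
          refine ⟨t, ?_, by simpa [shift] using h⟩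
          have h2 : a ≤ lam () ∧ lam () ≤ b := hf ()
          simp only [Set.mem_Icc]
          omega
  | G a b φ ih =>
      rintro ⟨hab, hwφ⟩ x
      rcases hat : φ.atomOf with _ | μ
      · rw [decompose_G_none a b φ hat,
          outerG_iff a b hab _ (decompose_constInvOK φ hwφ), STL.sat]
        constructor
        · intro h k hk
          exact (ih hwφ _).1 (h k hk)
        · intro h k hk
          exact (ih hwφ _).2 (h k hk)
      · rw [STL.atomOf_eq_some hat]
        simp only [STL.sat, decompose, STL.atomOf]
        constructor
        · intro h
          refine ⟨fun i => i.elim, fun i => i.elim, fun P hP => ?_⟩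
          replace hP := List.mem_singleton.1 hP
          subst hP
          simp only [Prog.holds, Aff.eval, List.map_nil, List.sum_nil, add_zero]
          intro t ht
          simpa [shift] using h t ht
        · rintro ⟨lam, -, hp⟩ k hk
          have := hp _ (List.mem_singleton_self _)
          simp only [Prog.holds, Aff.eval, List.map_nil, List.sum_nil, add_zero] at this
          simpa [shift] using this k hk
  | U g a b ψ ih =>
      rintro ⟨hab, hg, hwψ⟩ x
      rw [show decompose (STL.U g a b ψ) = (decompose ψ).outerU g a b from rfl,
        outerU_iff g hg a b, STL.sat]
      constructor
      · rintro ⟨k, hk, hs, hu⟩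
        exact ⟨k, hk, (ih hwψ _).1 hs, hu⟩
      · rintro ⟨k, hk, hs, hu⟩
        exact ⟨k, hk, (ih hwψ _).2 hs, hu⟩
/-- **Soundness of semantics-based STL decomposition (Lemma 1).**
For an STL formula `φ` in positive normal form without disjunctions (with every until-left
operand a conjunction of always-over-atomic formulas, and all interval bounds `a ≤ b`), and
for every signal `x : ℕ → X`: `x` satisfies `φ` iff there exists a feasible assignment `lam`
of the time variables `Λ_φ` (satisfying every interval constraint in `T_φ`) such that every
progress in `P_φ`, with its endpoints evaluated at `lam`, holds on `x`. In particular, if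
`Λ_φ = ∅` then `x` satisfies `φ` iff every progress in `P_φ` holds on `x`. -/
theorem stl_decomposition_sound {X : Type} (φ : STL X) (hwf : φ.WF) (x : ℕ → X) :
    (φ.sat x ↔ ∃ lam : (decompose φ).ι → ℕ,
        (decompose φ).Feasible lam ∧ ∀ P ∈ (decompose φ).progs, P.holds lam x) ∧
    (IsEmpty (decompose φ).ι →
      (φ.sat x ↔ ∀ P ∈ (decompose φ).progs, ∀ lam : (decompose φ).ι → ℕ, P.holds lam x)) := by
  have main := decompose_sound φ hwf x
  refine ⟨main, fun he => ?_⟩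
  rw [main]
  constructor
  · rintro ⟨lam, -, hp⟩ P hP lam'
    have h : lam' = lam := funext fun i => he.elim i
    rw [h]
    exact hp P hP
  · intro h
    exact ⟨fun i => he.elim i, fun i => he.elim i, fun P hP => h P hP _⟩
end

section
/- Until with an always left operand prolongs the invariance: Let X be a type, μ : X → Prop a predicate, Ψ : (ℕ → X) → Prop a signal-predicate, and a, b, c, d naturals with c ≤ d. Let Φ be the signal-predicate defined by Φ(y) iff ∀ t ∈ [c,d], μ(y t) (i.e., Φ is the semantics of G_{[c,d]}μ). Then for every signal x : ℕ → X, the until operator (Φ U[a,b] Ψ) holds at x if and only if there exists λ ∈ [a,b] such that Ψ holds at the λ-shift of x and μ(x t) holds for every t ∈ [c, d+λ]. -/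
/-- The eventually operator `F[a,b]Φ` on signal-predicates. -/
def Ev {X : Type} (a b : ℕ) (Φ : (ℕ → X) → Prop) (x : ℕ → X) : Prop :=
  ∃ k ∈ Set.Icc a b, Φ (shift x k)

/-- The always operator `G[a,b]Φ` on signal-predicates. -/
def Al {X : Type} (a b : ℕ) (Φ : (ℕ → X) → Prop) (x : ℕ → X) : Prop :=
  ∀ k ∈ Set.Icc a b, Φ (shift x k)

/-- The until operator `Φ U[a,b] Ψ` on signal-predicates. -/
def Un {X : Type} (Φ : (ℕ → X) → Prop) (a b : ℕ) (Ψ : (ℕ → X) → Prop) (x : ℕ → X) : Prop :=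
  ∃ k ∈ Set.Icc a b, Ψ (shift x k) ∧ ∀ j ∈ Set.Icc 0 k, Φ (shift x j)

/-! The windows `[c + j, d + j]`, `j ∈ [0, k]`, cover `[c, d + k]` as soon as `c ≤ d`: a time
`t ≤ d` lies in the first window, and a later one in the window ending at `t`. Hence
`G[0,k] G[c,d] μ` is `G[c,d+k] μ`, which is the left operand of the until. -/

theorem exists_add_mem_Icc_of_mem_Icc_add {c d k t : ℕ} (hcd : c ≤ d)
    (ht : t ∈ Set.Icc c (d + k)) : ∃ j ∈ Set.Icc 0 k, ∃ s ∈ Set.Icc c d, t = s + j := by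
  obtain ⟨hct, htd⟩ := ht
  by_cases h : t ≤ d
  · exact ⟨0, ⟨le_rfl, Nat.zero_le k⟩, t, ⟨hct, h⟩, rfl⟩
  · exact ⟨t - d, ⟨Nat.zero_le _, by omega⟩, d, ⟨hcd, le_rfl⟩, by omega⟩

theorem al_zero_forall_Icc_iff {X : Type} (μ : X → Prop) {c d : ℕ} (hcd : c ≤ d) (k : ℕ)
    (x : ℕ → X) :
    Al 0 k (fun y => ∀ t ∈ Set.Icc c d, μ (y t)) x ↔ ∀ t ∈ Set.Icc c (d + k), μ (x t) := by
  constructor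
  · intro h t ht
    obtain ⟨j, hj, s, hs, rfl⟩ := exists_add_mem_Icc_of_mem_Icc_add hcd ht
    exact h j hj s hs
  · rintro h j ⟨-, hj⟩ t ⟨hct, htd⟩
    exact h (t + j) ⟨by omega, by omega⟩

/-- **Until with an always left operand prolongs the invariance.**
If `Φ` is the semantics of `G_{[c,d]}μ`, then `Φ U[a,b] Ψ` holds at `x` iff there is
`l ∈ [a,b]` with `Ψ` holding at the `l`-shift of `x` and `μ (x t)` for all `t ∈ [c, d+l]`. -/
theorem until_always_left_prolongs {X : Type} (μ : X → Prop) (Ψ : (ℕ → X) → Prop)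
    (a b c d : ℕ) (hcd : c ≤ d) (x : ℕ → X) :
    Un (fun y => ∀ t ∈ Set.Icc c d, μ (y t)) a b Ψ x ↔
      ∃ l ∈ Set.Icc a b, Ψ (shift x l) ∧ ∀ t ∈ Set.Icc c (d + l), μ (x t) :=
  exists_congr fun l => and_congr_right fun _ =>
    and_congr_right fun _ => al_zero_forall_Icc_iff μ hcd l x
end
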